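/- Let p > 0, h > 0, x₀ ∈ ℝ and i ∈ ℤ, with knots x_j = x₀ + jh. The exponential B-spline φ_i : ℝ → ℝ is twice continuously differentiable on ℝ (i.e. φ_i ∈ C²(ℝ)); in particular its values, first derivatives and second derivatives computed from the adjacent piecewise formulas agree at each of the knots x_{i−2}, x_{i−1}, x_i, x_{i+1}, x_{i+2}. -/

import Mathlib

/-!
With `g(t) = t - sinh(p t)/p`, the spline is a combination of five translates of the truncated
kernel `t ↦ g(max t 0)`, centred at the knots with weights `-b₂, b₂ - b₁, 2 b₁, b₂ - b₁, -b₂`.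
The truncated kernel is `C²` because `g`, `g'` and `g''` all vanish at `0`. Matching the
representation with the five pieces reduces, by oddness of `g`, to two identities in the
coefficients: the full five-term combination of translates of `g` vanishes identically (so the
kernel sum vanishes beyond `x_{i+2}`), and on `[x_{i-1}, x_i]` the central piece equals the sum of
the two leftmost terms.
-/

/-- The exponential B-spline `φ_i` with parameter `p`, mesh size `h` and knots
`x_j = x₀ + j·h`, defined piecewise on `[x_{i−2}, x_{i+2}]` and zero elsewhere. -/
noncomputable def expBspline (p h x₀ : ℝ) (i : ℤ) : ℝ → ℝ := fun x =>
  let s := Real.sinh (p * h)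
  let c := Real.cosh (p * h)
  let a₁ := p * h * c / (p * h * c - s)
  let b₁ := p / 2 * ((c * (c - 1) + s ^ 2) / ((p * h * c - s) * (1 - c)))
  let b₂ := p / (2 * (p * h * c - s))
  let c₁ := 1 / 4 * ((Real.exp (-(p * h)) * (1 - c) + s * (Real.exp (-(p * h)) - 1)) /
      ((p * h * c - s) * (1 - c)))
  let d₁ := 1 / 4 * ((Real.exp (p * h) * (c - 1) + s * (Real.exp (p * h) - 1)) /
      ((p * h * c - s) * (1 - c)))
  let X : ℤ → ℝ := fun j => x₀ + (j : ℝ) * h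
  if X (i - 2) ≤ x ∧ x ≤ X (i - 1) then
    b₂ * ((X (i - 2) - x) - Real.sinh (p * (X (i - 2) - x)) / p)
  else if X (i - 1) ≤ x ∧ x ≤ X i then
    a₁ + b₁ * (X i - x) + c₁ * Real.exp (p * (X i - x)) + d₁ * Real.exp (-(p * (X i - x)))
  else if X i ≤ x ∧ x ≤ X (i + 1) then
    a₁ + b₁ * (x - X i) + c₁ * Real.exp (p * (x - X i)) + d₁ * Real.exp (-(p * (x - X i)))
  else if X (i + 1) ≤ x ∧ x ≤ X (i + 2) then
    b₂ * ((x - X (i + 2)) - Real.sinh (p * (x - X (i + 2))) / p)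
  else 0

open Real Set

theorem hasDerivAt_comp_max_zero {g g' : ℝ → ℝ} (hg : ∀ t, HasDerivAt g (g' t) t)
    (h0 : g' 0 = 0) (t : ℝ) : HasDerivAt (fun s => g (max s 0)) (g' (max t 0)) t := by
  rcases lt_trichotomy t 0 with ht | rfl | ht
  · have hconst : (fun s => g (max s 0)) =ᶠ[nhds t] fun _ => g 0 :=
      eventually_lt_nhds ht |>.mono fun s hs => by simp [max_eq_right hs.le]
    rw [max_eq_right ht.le, h0]
    exact (hasDerivAt_const t (g 0)).congr_of_eventuallyEq hconst
  · have hleft : HasDerivWithinAt (fun s => g (max s 0)) 0 (Iic 0) 0 :=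
      (hasDerivWithinAt_const 0 _ (g 0)).congr
        (fun s hs => by simp [max_eq_right (mem_Iic.mp hs)]) (by simp)
    have hright : HasDerivWithinAt (fun s => g (max s 0)) 0 (Ici 0) 0 :=
      ((hg 0).hasDerivWithinAt.congr (fun s hs => by simp [max_eq_left (mem_Ici.mp hs)])
        (by simp)).congr_deriv h0
    simpa [h0] using (hleft.union hright).hasDerivAt (by simp)
  · have hid : (fun s => g (max s 0)) =ᶠ[nhds t] g :=
      eventually_gt_nhds ht |>.mono fun s hs => by simp [max_eq_left hs.le]
    rw [max_eq_left ht.le]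
    exact (hg t).congr_of_eventuallyEq hid

theorem contDiff_two_comp_max_zero {g g' g'' : ℝ → ℝ} (hg : ∀ t, HasDerivAt g (g' t) t)
    (hg' : ∀ t, HasDerivAt g' (g'' t) t) (hg'' : Continuous g'') (h1 : g' 0 = 0)
    (h2 : g'' 0 = 0) : ContDiff ℝ 2 fun t => g (max t 0) := by
  have d1 := hasDerivAt_comp_max_zero hg h1
  have d2 := hasDerivAt_comp_max_zero hg' h2
  rw [show (2 : WithTop ℕ∞) = 1 + 1 from rfl, contDiff_succ_iff_deriv]
  refine ⟨fun t => (d1 t).differentiableAt, by simp, ?_⟩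
  rw [funext fun t => (d1 t).deriv, contDiff_one_iff_deriv, funext fun t => (d2 t).deriv]
  exact ⟨fun t => (d2 t).differentiableAt, hg''.comp (continuous_id.max continuous_const)⟩

namespace ExpBspline

noncomputable def expKernel (p t : ℝ) : ℝ := t - sinh (p * t) / p

noncomputable def truncKernel (p t : ℝ) : ℝ := expKernel p (max t 0)

@[simp] theorem expKernel_zero (p : ℝ) : expKernel p 0 = 0 := by simp [expKernel]

theorem expKernel_neg (p t : ℝ) : expKernel p (-t) = -expKernel p t := by
  simp only [expKernel, mul_neg, sinh_neg, neg_div]; ring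

theorem hasDerivAt_expKernel {p : ℝ} (hp : p ≠ 0) (t : ℝ) :
    HasDerivAt (expKernel p) (1 - cosh (p * t)) t := by
  refine ((hasDerivAt_id t).sub (((hasDerivAt_sinh _).comp t
    ((hasDerivAt_id t).const_mul p)).div_const p)).congr_deriv ?_
  field_simp
  rfl

theorem hasDerivAt_one_sub_cosh_mul (p t : ℝ) :
    HasDerivAt (fun t => 1 - cosh (p * t)) (-(p * sinh (p * t))) t :=
  (((hasDerivAt_cosh _).comp t ((hasDerivAt_id t).const_mul p)).const_sub 1).congr_deriv
    (by simp [mul_comm])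

theorem contDiff_truncKernel {p : ℝ} (hp : p ≠ 0) : ContDiff ℝ 2 (truncKernel p) :=
  contDiff_two_comp_max_zero (hasDerivAt_expKernel hp) (hasDerivAt_one_sub_cosh_mul p)
    (by fun_prop) (by simp) (by simp)

section Coefficients

variable (p h : ℝ)

noncomputable def den : ℝ := p * h * cosh (p * h) - sinh (p * h)

noncomputable def a₁ : ℝ := p * h * cosh (p * h) / den p h

noncomputable def b₁ : ℝ :=
  p / 2 * ((cosh (p * h) * (cosh (p * h) - 1) + sinh (p * h) ^ 2) / (den p h * (1 - cosh (p * h))))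

noncomputable def b₂ : ℝ := p / (2 * den p h)

noncomputable def c₁ : ℝ := 1 / 4 * ((exp (-(p * h)) * (1 - cosh (p * h)) +
    sinh (p * h) * (exp (-(p * h)) - 1)) / (den p h * (1 - cosh (p * h))))

noncomputable def d₁ : ℝ := 1 / 4 * ((exp (p * h) * (cosh (p * h) - 1) +
    sinh (p * h) * (exp (p * h) - 1)) / (den p h * (1 - cosh (p * h))))

noncomputable def central (v : ℝ) : ℝ :=
  a₁ p h + b₁ p h * v + c₁ p h * exp (p * v) + d₁ p h * exp (-(p * v))

/- The closed forms below are multiples of `(den p h)⁻¹`, so the identities built from them hold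
without knowing `den p h ≠ 0`. -/
theorem a₁_eq : a₁ p h = p * h * cosh (p * h) * (den p h)⁻¹ := div_eq_mul_inv _ _

theorem b₂_eq : b₂ p h = p / 2 * (den p h)⁻¹ := by
  rw [b₂]; ring

variable {p h}

theorem b₁_eq (hc : cosh (p * h) ≠ 1) :
    b₁ p h = -(p * (2 * cosh (p * h) + 1)) / 2 * (den p h)⁻¹ := by
  have hnum : cosh (p * h) * (cosh (p * h) - 1) + sinh (p * h) ^ 2
      = -(2 * cosh (p * h) + 1) * (1 - cosh (p * h)) := by
    rw [sinh_sq]; ring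
  rw [b₁, hnum, mul_div_mul_right _ _ (sub_ne_zero.mpr hc.symm)]
  ring

theorem c₁_eq (hc : cosh (p * h) ≠ 1) :
    c₁ p h = (1 + 2 * exp (-(p * h))) / 4 * (den p h)⁻¹ := by
  have hnum : exp (-(p * h)) * (1 - cosh (p * h)) + sinh (p * h) * (exp (-(p * h)) - 1)
      = (1 + 2 * exp (-(p * h))) * (1 - cosh (p * h)) := by
    rw [cosh_eq, sinh_eq, exp_neg]
    field_simp
    ring
  rw [c₁, hnum, mul_div_mul_right _ _ (sub_ne_zero.mpr hc.symm)]
  ring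

theorem d₁_eq (hc : cosh (p * h) ≠ 1) :
    d₁ p h = -(2 * exp (p * h) + 1) / 4 * (den p h)⁻¹ := by
  have hnum : exp (p * h) * (cosh (p * h) - 1) + sinh (p * h) * (exp (p * h) - 1)
      = -(2 * exp (p * h) + 1) * (1 - cosh (p * h)) := by
    rw [cosh_eq, sinh_eq, exp_neg]
    field_simp
    ring
  rw [d₁, hnum, mul_div_mul_right _ _ (sub_ne_zero.mpr hc.symm)]
  ring

theorem central_neg (hph : p * h ≠ 0) (v : ℝ) :
    central p h (-v) =
      -b₂ p h * expKernel p (v + 2 * h) + (b₂ p h - b₁ p h) * expKernel p (v + h) := by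
  have hp := left_ne_zero_of_mul hph
  have hc := (one_lt_cosh.mpr hph).ne'
  rw [central, a₁_eq, b₂_eq, b₁_eq hc, c₁_eq hc, d₁_eq hc]
  generalize (den p h)⁻¹ = δ
  simp only [expKernel, cosh_eq, sinh_eq, two_mul, mul_add, mul_neg, neg_neg, exp_add, exp_neg]
  field_simp
  ring

theorem expKernel_combination_eq_zero (hph : p * h ≠ 0) (v : ℝ) :
    -b₂ p h * expKernel p (v + 2 * h) + (b₂ p h - b₁ p h) * expKernel p (v + h)
      + 2 * b₁ p h * expKernel p v + (b₂ p h - b₁ p h) * expKernel p (v - h)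
      - b₂ p h * expKernel p (v - 2 * h) = 0 := by
  have hp := left_ne_zero_of_mul hph
  have hc := (one_lt_cosh.mpr hph).ne'
  rw [b₂_eq, b₁_eq hc]
  generalize (den p h)⁻¹ = δ
  simp only [expKernel, cosh_eq, sinh_eq, two_mul, mul_add, mul_sub, exp_add, exp_sub, exp_neg]
  field_simp
  ring

end Coefficients

section Representation

variable (p h : ℝ)

def knot (x₀ : ℝ) (j : ℤ) : ℝ := x₀ + j * h

theorem knot_add (x₀ : ℝ) (i k : ℤ) : knot h x₀ (i + k) = knot h x₀ i + k * h := by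
  simp only [knot]; push_cast; ring

theorem knot_sub (x₀ : ℝ) (i k : ℤ) : knot h x₀ (i - k) = knot h x₀ i - k * h := by
  simp only [knot]; push_cast; ring

theorem expBspline_apply (x₀ : ℝ) (i : ℤ) (x : ℝ) : expBspline p h x₀ i x =
    if knot h x₀ (i - 2) ≤ x ∧ x ≤ knot h x₀ (i - 1) then
      b₂ p h * expKernel p (knot h x₀ (i - 2) - x)
    else if knot h x₀ (i - 1) ≤ x ∧ x ≤ knot h x₀ i then central p h (knot h x₀ i - x)
    else if knot h x₀ i ≤ x ∧ x ≤ knot h x₀ (i + 1) then central p h (x - knot h x₀ i)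
    else if knot h x₀ (i + 1) ≤ x ∧ x ≤ knot h x₀ (i + 2) then
      b₂ p h * expKernel p (x - knot h x₀ (i + 2))
    else 0 := rfl

noncomputable def kernelSum (v : ℝ) : ℝ :=
  -b₂ p h * truncKernel p (v + 2 * h) + (b₂ p h - b₁ p h) * truncKernel p (v + h)
    + 2 * b₁ p h * truncKernel p v + (b₂ p h - b₁ p h) * truncKernel p (v - h)
    - b₂ p h * truncKernel p (v - 2 * h)

variable {p h}

theorem contDiff_kernelSum (hp : p ≠ 0) : ContDiff ℝ 2 (kernelSum p h) := by
  have := contDiff_truncKernel hp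
  unfold kernelSum
  fun_prop

theorem expBspline_eq_kernelSum (hp : p ≠ 0) (hh : 0 < h) (x₀ : ℝ) (i : ℤ) (x : ℝ) :
    expBspline p h x₀ i x = kernelSum p h (x - knot h x₀ i) := by
  have hph : p * h ≠ 0 := mul_ne_zero hp hh.ne'
  have hzero := expKernel_combination_eq_zero hph
  obtain ⟨v, rfl⟩ : ∃ v, x = knot h x₀ i + v := ⟨x - knot h x₀ i, by ring⟩
  rw [expBspline_apply, knot_sub, knot_sub, knot_add, knot_add, add_sub_cancel_left]
  generalize knot h x₀ i = y
  simp only [Int.cast_one, Int.cast_ofNat, one_mul, kernelSum, truncKernel]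
  split_ifs with h₁ h₂ h₃ h₄
  · obtain ⟨hl, hr⟩ := h₁
    simp (disch := grind) only [max_eq_left, max_eq_right, expKernel_zero]
    rw [show y - 2 * h - (y + v) = -(v + 2 * h) by ring, expKernel_neg]
    ring
  · obtain ⟨hl, hr⟩ := h₂
    simp (disch := grind) only [max_eq_left, max_eq_right, expKernel_zero]
    rw [sub_add_cancel_left, central_neg hph]
    ring
  · obtain ⟨hl, hr⟩ := h₃
    simp (disch := grind) only [max_eq_left, max_eq_right, expKernel_zero]
    rw [← neg_neg v, central_neg hph, show -v + 2 * h = -(v - 2 * h) by ring,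
      show -v + h = -(v - h) by ring, expKernel_neg, expKernel_neg, neg_neg]
    linear_combination -hzero v
  · obtain ⟨hl, hr⟩ := h₄
    simp (disch := grind) only [max_eq_left, max_eq_right, expKernel_zero]
    rw [add_sub_add_left_eq_sub]
    linear_combination -hzero v
  · rcases lt_or_ge v (-2 * h) with hv | hv
    · simp (disch := grind) only [max_eq_right, expKernel_zero]
      ring
    · have hv' : 2 * h < v := by grind
      simp (disch := grind) only [max_eq_left]
      linear_combination -hzero v

end Representation

end ExpBspline

theorem expBspline_contDiff_two (p h x₀ : ℝ) (hp : 0 < p) (hh : 0 < h) (i : ℤ) :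
    ContDiff ℝ 2 (expBspline p h x₀ i) := by
  rw [funext (ExpBspline.expBspline_eq_kernelSum hp.ne' hh x₀ i)]
  exact (ExpBspline.contDiff_kernelSum hp.ne').comp (contDiff_id.sub contDiff_const)
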